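/- Let l_1, ..., l_n : ℝ^d → ℝ be arbitrary functions and s_1, ..., s_n real numbers such that the index sets {i : s_i > 0} and {i : s_i < 0} are nonempty. Fix a point x, let M⁺ = max_{i : s_i > 0} l_i(x) and M⁻ = max_{i : s_i < 0} l_i(x), and suppose M⁺ − M⁻ > δ > 0 and M⁺ ≥ c > 0. Then for every β > (1/min{δ,c}) · log((∑_i |s_i| + 1)/min_{i : s_i ≠ 0} |s_i|), we have ∑_{i=1}^n s_i · exp(β · l_i(x)) > 1. -/
import Mathlib


theorem signed_exp_sum_gt_one
    {ι : Type*} [Fintype ι] (t s : ι → ℝ)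
    (hP : (Finset.univ.filter (fun i => 0 < s i)).Nonempty)
    (hQ : (Finset.univ.filter (fun i => s i < 0)).Nonempty)
    (δ c : ℝ) (hδ : 0 < δ) (hc : 0 < c)
    (hgap : (Finset.univ.filter (fun i => 0 < s i)).sup' hP t
          - (Finset.univ.filter (fun i => s i < 0)).sup' hQ t > δ)
    (hM : (Finset.univ.filter (fun i => 0 < s i)).sup' hP t ≥ c)
    (β : ℝ)
    (hβ : β > (1 / min δ c) *
      Real.log ((∑ i, |s i| + 1) /
        (Finset.univ.filter (fun i => s i ≠ 0)).inf'
          (hP.mono (by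
            intro i hi
            simp only [Finset.mem_filter, Finset.mem_univ, true_and] at hi ⊢
            exact ne_of_gt hi))
          (fun i => |s i|))) :
    (∑ i, s i * Real.exp (β * t i)) > 1 := by
  classical
  have hNne : (Finset.univ.filter (fun i => s i ≠ 0)).Nonempty := by
    refine hP.mono ?_
    intro i hi
    simp only [Finset.mem_filter, Finset.mem_univ, true_and] at hi ⊢
    exact ne_of_gt hi
  set Mp := (Finset.univ.filter (fun i => 0 < s i)).sup' hP t with hMpdef
  set Mm := (Finset.univ.filter (fun i => s i < 0)).sup' hQ t with hMmdef
  set m := (Finset.univ.filter (fun i => s i ≠ 0)).inf' hNne (fun i => |s i|) with hmdef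
  set S := ∑ i, |s i| with hSdef
  have hβ' : (1 / min δ c) * Real.log ((S + 1) / m) < β := hβ
  have hm : 0 < m := by
    rw [hmdef, Finset.lt_inf'_iff]
    intro i hi
    simp only [Finset.mem_filter, Finset.mem_univ, true_and] at hi
    exact abs_pos.mpr hi
  have hmS : m ≤ S := by
    obtain ⟨j, hj⟩ := hNne
    refine le_trans (Finset.inf'_le _ hj) ?_
    exact Finset.single_le_sum (fun i _ => abs_nonneg (s i)) (Finset.mem_univ j)
  have hS1 : 1 < (S + 1) / m := (one_lt_div hm).mpr (by linarith)
  have hlogpos : 0 < Real.log ((S + 1) / m) := Real.log_pos hS1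
  have hminpos : 0 < min δ c := lt_min hδ hc
  have hβpos : 0 < β := lt_trans (by positivity) hβ'
  have hβmin : Real.log ((S + 1) / m) < β * min δ c := by
    rw [one_div, inv_mul_eq_div, div_lt_iff₀ hminpos] at hβ'
    exact hβ'
  have hexp : (S + 1) / m < Real.exp (β * min δ c) := by
    rw [← Real.exp_log (show (0:ℝ) < (S + 1) / m by positivity)]
    exact Real.exp_lt_exp.mpr hβmin
  have hkey : S + 1 < m * Real.exp (β * min δ c) := by
    rw [div_lt_iff₀ hm] at hexp
    linarith
  obtain ⟨i₀, hi₀P, hti₀⟩ := Finset.exists_mem_eq_sup' hP t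
  have hsi₀pos : 0 < s i₀ := by
    simpa only [Finset.mem_filter, Finset.mem_univ, true_and] using hi₀P
  have hi₀N : i₀ ∈ Finset.univ.filter (fun i => s i ≠ 0) := by
    simp only [Finset.mem_filter, Finset.mem_univ, true_and]
    exact ne_of_gt hsi₀pos
  have hmle : m ≤ s i₀ := by
    refine le_trans (Finset.inf'_le _ hi₀N) ?_
    exact le_of_eq (abs_of_pos hsi₀pos)
  have hi₀Q : i₀ ∉ Finset.univ.filter (fun i => s i < 0) := by
    simp only [Finset.mem_filter, Finset.mem_univ, true_and, not_lt]
    exact hsi₀pos.le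
  have hsplit : s i₀ * Real.exp (β * t i₀)
      + ∑ i ∈ Finset.univ.filter (fun i => s i < 0), s i * Real.exp (β * t i)
      ≤ ∑ i, s i * Real.exp (β * t i) := by
    have hsub : ∑ i ∈ insert i₀ (Finset.univ.filter (fun i => s i < 0)),
        s i * Real.exp (β * t i) ≤ ∑ i, s i * Real.exp (β * t i) := by
      refine Finset.sum_le_sum_of_subset_of_nonneg (Finset.subset_univ _) ?_
      intro i _ hiq
      have hsn : ¬ s i < 0 := by
        intro h
        exact hiq (Finset.mem_insert_of_mem (by
          simp only [Finset.mem_filter, Finset.mem_univ, true_and]; exact h))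
      exact mul_nonneg (not_lt.mp hsn) (Real.exp_pos _).le
    rw [Finset.sum_insert hi₀Q] at hsub
    exact hsub
  have hQbound : ∀ i ∈ Finset.univ.filter (fun i => s i < 0),
      -(|s i| * Real.exp (β * Mm)) ≤ s i * Real.exp (β * t i) := by
    intro i hi
    have hsi : s i < 0 := by
      simpa only [Finset.mem_filter, Finset.mem_univ, true_and] using hi
    have htle : t i ≤ Mm := Finset.le_sup' t hi
    have hee : Real.exp (β * t i) ≤ Real.exp (β * Mm) :=
      Real.exp_le_exp.mpr (mul_le_mul_of_nonneg_left htle hβpos.le)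
    have : -(|s i| * Real.exp (β * Mm)) ≤ -(|s i| * Real.exp (β * t i)) := by
      have := abs_nonneg (s i)
      nlinarith
    refine le_trans this (le_of_eq ?_)
    rw [abs_of_neg hsi]; ring
  have hQabs : ∑ i ∈ Finset.univ.filter (fun i => s i < 0), |s i| ≤ S := by
    rw [hSdef]
    exact Finset.sum_le_sum_of_subset_of_nonneg (Finset.subset_univ _)
      (fun i _ _ => abs_nonneg (s i))
  have hQsum : -(S * Real.exp (β * Mm))
      ≤ ∑ i ∈ Finset.univ.filter (fun i => s i < 0), s i * Real.exp (β * t i) := by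
    have h1 := Finset.sum_le_sum hQbound
    have h2 : ∑ i ∈ Finset.univ.filter (fun i => s i < 0), (-(|s i| * Real.exp (β * Mm)))
        = -((∑ i ∈ Finset.univ.filter (fun i => s i < 0), |s i|) * Real.exp (β * Mm)) := by
      rw [Finset.sum_neg_distrib, ← Finset.sum_mul]
    have h3 : -(S * Real.exp (β * Mm))
        ≤ -((∑ i ∈ Finset.univ.filter (fun i => s i < 0), |s i|) * Real.exp (β * Mm)) := by
      have := Real.exp_pos (β * Mm)
      nlinarith
    calc -(S * Real.exp (β * Mm))
        ≤ -((∑ i ∈ Finset.univ.filter (fun i => s i < 0), |s i|) * Real.exp (β * Mm)) := h3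
      _ = ∑ i ∈ Finset.univ.filter (fun i => s i < 0), (-(|s i| * Real.exp (β * Mm))) := h2.symm
      _ ≤ _ := h1
  have hMpMm : Mm + min δ c ≤ Mp := by
    have := min_le_left δ c
    linarith
  have hcmin : min δ c ≤ Mp := le_trans (min_le_right δ c) hM
  have hA : Real.exp (β * Mm) ≤ Real.exp (β * (Mp - min δ c)) :=
    Real.exp_le_exp.mpr (mul_le_mul_of_nonneg_left (by linarith) hβpos.le)
  have hB : (1:ℝ) ≤ Real.exp (β * (Mp - min δ c)) := by
    rw [← Real.exp_zero]
    exact Real.exp_le_exp.mpr (by nlinarith)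
  have hmain : (S + 1) * Real.exp (β * (Mp - min δ c)) < m * Real.exp (β * Mp) := by
    have heq : m * Real.exp (β * Mp)
        = (m * Real.exp (β * min δ c)) * Real.exp (β * (Mp - min δ c)) := by
      rw [mul_assoc, ← Real.exp_add]; ring_nf
    rw [heq]
    exact mul_lt_mul_of_pos_right hkey (Real.exp_pos _)
  have hX : m * Real.exp (β * t i₀) ≤ s i₀ * Real.exp (β * t i₀) :=
    mul_le_mul_of_nonneg_right hmle (Real.exp_pos _).le
  have hti₀' : Real.exp (β * t i₀) = Real.exp (β * Mp) := by rw [← hti₀]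
  have hSA : S * Real.exp (β * Mm) ≤ S * Real.exp (β * (Mp - min δ c)) :=
    mul_le_mul_of_nonneg_left hA (by linarith)
  have hexpand : (S + 1) * Real.exp (β * (Mp - min δ c))
      = S * Real.exp (β * (Mp - min δ c)) + Real.exp (β * (Mp - min δ c)) := by ring
  rw [hti₀'] at hX hsplit
  linarith
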